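/- arXiv:1210.6383 — 3 statements merged into one kernel-verified Lean document; each statement's English description precedes it below -/
import Mathlib

section
/- (Paley–Wiener stability) Let S ⊆ ℝ be a bounded measurable set of positive measure and Λ = {λ_n} ⊂ ℝ such that E(Λ) is a Riesz basis of L²(S). Then there exists η = η(S, Λ) > 0 such that for every sequence Γ = {γ_n} ⊂ ℝ with |λ_n − γ_n| < η for all n, the system E(Γ) is also a Riesz basis of L²(S). -/
open MeasureTheory Complex
open scoped Real

/-- The exponential `e_λ(t) = e^{2πiλt}`. -/
noncomputable def expF (l t : ℝ) : ℂ := Complex.exp (2 * π * Complex.I * l * t)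

/-- `E(Λ)` (indexed by ℕ) is a Riesz basis of `L²(S)`: it is complete and satisfies
two-sided ℓ²-synthesis bounds on finitely supported coefficient sequences. -/
def IsExpRieszBasisSeq (S : Set ℝ) (Λ : ℕ → ℝ) : Prop :=
  (∀ f : ℝ → ℂ, MemLp f 2 (volume.restrict S) →
      (∀ n : ℕ, ∫ t in S, f t * Complex.exp (-(2 * π * Complex.I * (Λ n) * t)) = 0) →
      ∀ᵐ t ∂(volume.restrict S), f t = 0) ∧
  ∃ c C : ℝ, 0 < c ∧ 0 < C ∧ ∀ a : ℕ →₀ ℂ,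
    c * ∑ n ∈ a.support, ‖a n‖ ^ 2 ≤
        ∫ t in S, ‖∑ n ∈ a.support, a n * expF (Λ n) t‖ ^ 2 ∧
    (∫ t in S, ‖∑ n ∈ a.support, a n * expF (Λ n) t‖ ^ 2) ≤
        C * ∑ n ∈ a.support, ‖a n‖ ^ 2

/-!
Write `γ_n = λ_n + δ_n` and let `S ⊆ [-R, R]`. Expanding `e^{2πiδ_n t}` in its Taylor series,
`∑ b_n (e_{γ_n} - e_{λ_n}) = ∑_{k ≥ 1} (2πit)^k / k! · ∑_n b_n δ_n^k e_{λ_n}`, and the upper Riesz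
bound `B` of `E(Λ)` applied to each inner sum gives
`‖∑ b_n (e_{γ_n} - e_{λ_n})‖ ≤ B (e^{2πRη} - 1) ‖b‖₂`. For small `η` this is at most half the
lower Riesz bound, hence at most `½ ‖∑ b_n e_{λ_n}‖`. A perturbation of that size keeps both Riesz
bounds by the triangle inequality, and keeps completeness: if `g ⊥ e_{γ_n}` for all `n`, then
`|⟪w, g⟫| ≤ ½ ‖w‖ ‖g‖` on the span of the `e_{λ_n}`, which is dense, so `‖g‖² ≤ ½ ‖g‖²`.
-/

open Filter Topology
open scoped ENNReal InnerProductSpace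

lemma MeasureTheory.L2.norm_sq_eq_integral_norm_sq {α 𝕜 : Type*} [MeasurableSpace α]
    {μ : Measure α} [RCLike 𝕜] (f : Lp 𝕜 2 μ) : ‖f‖ ^ 2 = ∫ a, ‖f a‖ ^ 2 ∂μ := by
  rw [← inner_self_eq_norm_sq (𝕜 := 𝕜), L2.inner_def, ← integral_re (L2.integrable_inner f f)]
  simp only [inner_self_eq_norm_sq]

lemma MeasureTheory.Lp.coeFn_finset_sum {α E ι : Type*} [MeasurableSpace α] {μ : Measure α}
    [NormedAddCommGroup E] {p : ℝ≥0∞} (F : Finset ι) (f : ι → Lp E p μ) :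
    ⇑(∑ i ∈ F, f i) =ᵐ[μ] ∑ i ∈ F, ⇑(f i) := by
  classical
  induction F using Finset.induction_on with
  | empty => simpa using Lp.coeFn_zero E p μ
  | insert i F hi ih =>
    rw [Finset.sum_insert hi, Finset.sum_insert hi]
    exact (Lp.coeFn_add _ _).trans (EventuallyEq.rfl.add ih)

theorem Finsupp.forall_sum_iff_forall_finset {ι α β γ : Type*} [Zero α] [AddCommMonoid β]
    [AddCommMonoid γ] {g : ι → α → β} {h : ι → α → γ} (hg : ∀ i, g i 0 = 0)
    (hh : ∀ i, h i 0 = 0) (P : β → γ → Prop) :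
    (∀ a : ι →₀ α, P (a.sum g) (a.sum h)) ↔
      ∀ (F : Finset ι) (b : ι → α), P (∑ i ∈ F, g i (b i)) (∑ i ∈ F, h i (b i)) := by
  classical
  refine ⟨fun hP F b => ?_, fun hP a => hP a.support a⟩
  have hind : ∀ i ∈ F, Finsupp.indicator F (fun i _ => b i) i = b i :=
    fun i hi => Finsupp.indicator_of_mem hi _
  have key := hP (Finsupp.indicator F fun i _ => b i)
  rwa [Finsupp.sum_of_support_subset _ (Finsupp.support_indicator_subset _ _) _ fun i _ => hg i,
    Finsupp.sum_of_support_subset _ (Finsupp.support_indicator_subset _ _) _ fun i _ => hh i,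
    Finset.sum_congr rfl fun i hi => congrArg (g i) (hind i hi),
    Finset.sum_congr rfl fun i hi => congrArg (h i) (hind i hi)] at key

lemma mul_sqrt_le_iff_sq {A s x : ℝ} (hA : 0 ≤ A) (hs : 0 ≤ s) (hx : 0 ≤ x) :
    A * √s ≤ x ↔ A ^ 2 * s ≤ x ^ 2 := by
  rw [← pow_le_pow_iff_left₀ (by positivity) hx two_ne_zero, mul_pow, Real.sq_sqrt hs]

lemma le_mul_sqrt_iff_sq {A s x : ℝ} (hA : 0 ≤ A) (hs : 0 ≤ s) (hx : 0 ≤ x) :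
    x ≤ A * √s ↔ x ^ 2 ≤ A ^ 2 * s := by
  rw [← pow_le_pow_iff_left₀ hx (by positivity) two_ne_zero, mul_pow, Real.sq_sqrt hs]

lemma sqrt_sum_norm_mul_sq_le {ι R : Type*} [SeminormedRing R] (F : Finset ι) (b w : ι → R)
    {c : ℝ} (hc : 0 ≤ c) (hw : ∀ i, ‖w i‖ ≤ c) :
    √(∑ i ∈ F, ‖b i * w i‖ ^ 2) ≤ c * √(∑ i ∈ F, ‖b i‖ ^ 2) := by
  rw [← Real.sqrt_sq hc, ← Real.sqrt_mul (sq_nonneg c), Finset.mul_sum]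
  refine Real.sqrt_le_sqrt (Finset.sum_le_sum fun i _ => ?_)
  rw [← mul_pow, mul_comm c]
  exact pow_le_pow_left₀ (norm_nonneg _)
    ((norm_mul_le _ _).trans (mul_le_mul_of_nonneg_left (hw i) (norm_nonneg _))) 2

lemma Complex.hasSum_pow_succ_div_factorial (x : ℂ) :
    HasSum (fun k : ℕ => x ^ (k + 1) / (k + 1).factorial) (Complex.exp x - 1) := by
  have h := NormedSpace.expSeries_div_hasSum_exp x
  rw [← Complex.exp_eq_exp_ℂ] at h
  simpa using (hasSum_nat_add_iff' 1).2 h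

lemma Real.sum_range_pow_succ_div_factorial_le {x : ℝ} (hx : 0 ≤ x) (K : ℕ) :
    ∑ k ∈ Finset.range K, x ^ (k + 1) / (k + 1).factorial ≤ Real.exp x - 1 := by
  have h := Real.sum_le_exp_of_nonneg hx (K + 1)
  rw [Finset.sum_range_succ'] at h
  simp only [pow_zero, Nat.factorial_zero, Nat.cast_one, div_one] at h
  linarith

lemma exists_pos_mul_exp_sub_one_le (B a : ℝ) {ε : ℝ} (hε : 0 < ε) :
    ∃ η > 0, B * (Real.exp (a * η) - 1) ≤ ε := by
  have h : Tendsto (fun η => B * (Real.exp (a * η) - 1)) (𝓝[>] 0) (𝓝 0) := by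
    have : Continuous (fun η => B * (Real.exp (a * η) - 1)) := by fun_prop
    simpa using (this.tendsto 0).mono_left nhdsWithin_le_nhds
  obtain ⟨η, hle, hη⟩ := ((h.eventually (ge_mem_nhds hε)).and self_mem_nhdsWithin).exists
  exact ⟨η, hη, hle⟩

lemma le_norm_and_norm_le_of_norm_sub_le {E : Type*} [SeminormedAddCommGroup E] {x y : E}
    {θ : ℝ} (h : ‖y - x‖ ≤ θ * ‖x‖) : (1 - θ) * ‖x‖ ≤ ‖y‖ ∧ ‖y‖ ≤ (1 + θ) * ‖x‖ :=
  ⟨by linarith [norm_sub_norm_le x y, norm_sub_rev x y], by linarith [norm_sub_norm_le y x]⟩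

theorem eq_zero_of_forall_inner_eq_zero_of_norm_sum_sub_le {𝕜 E ι : Type*} [RCLike 𝕜]
    [NormedAddCommGroup E] [InnerProductSpace 𝕜 E] [CompleteSpace E] {u v : ι → E} {θ : ℝ}
    (hθ : θ < 1)
    (hvu : ∀ (F : Finset ι) (b : ι → 𝕜),
      ‖∑ i ∈ F, b i • v i - ∑ i ∈ F, b i • u i‖ ≤ θ * ‖∑ i ∈ F, b i • u i‖)
    (hu : ∀ g : E, (∀ i, ⟪u i, g⟫_𝕜 = 0) → g = 0) {g : E} (hg : ∀ i, ⟪v i, g⟫_𝕜 = 0) :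
    g = 0 := by
  have hdense : g ∈ closure (Submodule.span 𝕜 (Set.range u) : Set E) := by
    have htop : (Submodule.span 𝕜 (Set.range u)).topologicalClosure = ⊤ :=
      Submodule.topologicalClosure_eq_top_iff.2 <| (Submodule.eq_bot_iff _).2 fun w hw =>
        hu w fun i => (Submodule.mem_orthogonal _ w).1 hw _ (Submodule.subset_span ⟨i, rfl⟩)
    rw [← Submodule.topologicalClosure_coe, htop]
    trivial
  have hspan : (Submodule.span 𝕜 (Set.range u) : Set E) ⊆ {w | ‖⟪w, g⟫_𝕜‖ ≤ θ * ‖w‖ * ‖g‖} := by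
    intro w hw
    obtain ⟨b, rfl⟩ := Finsupp.mem_span_range_iff_exists_finsupp.1 hw
    have hvg : ⟪∑ i ∈ b.support, b i • v i, g⟫_𝕜 = 0 := by
      simp [sum_inner, inner_smul_left, hg]
    calc ‖⟪∑ i ∈ b.support, b i • u i, g⟫_𝕜‖
        = ‖⟪∑ i ∈ b.support, b i • v i - ∑ i ∈ b.support, b i • u i, g⟫_𝕜‖ := by
          rw [inner_sub_left, hvg, zero_sub, norm_neg]
      _ ≤ ‖∑ i ∈ b.support, b i • v i - ∑ i ∈ b.support, b i • u i‖ * ‖g‖ :=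
          norm_inner_le_norm _ _
      _ ≤ θ * ‖∑ i ∈ b.support, b i • u i‖ * ‖g‖ := by gcongr; exact hvu _ _
  have hgg : ‖⟪g, g⟫_𝕜‖ ≤ θ * ‖g‖ * ‖g‖ :=
    closure_minimal hspan (isClosed_le (by fun_prop) (by fun_prop)) hdense
  rw [inner_self_eq_norm_sq_to_K, norm_pow, RCLike.norm_ofReal, abs_norm] at hgg
  have hsq : ‖g‖ ^ 2 = 0 := le_antisymm (by nlinarith [sq_nonneg ‖g‖]) (sq_nonneg _)
  exact norm_eq_zero.1 (pow_eq_zero_iff two_ne_zero |>.1 hsq)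

lemma norm_expF (l t : ℝ) : ‖expF l t‖ = 1 := by
  rw [expF, Complex.norm_exp]
  simp

lemma continuous_expF (l : ℝ) : Continuous (expF l) := by
  unfold expF
  fun_prop

lemma hasSum_expF_sub (l g t : ℝ) :
    HasSum (fun k : ℕ => (2 * π * Complex.I * t) ^ (k + 1) / (k + 1).factorial
        * ((g - l : ℝ) : ℂ) ^ (k + 1) * expF l t) (expF g t - expF l t) := by
  have hsplit : expF g t - expF l t
      = (Complex.exp (2 * π * Complex.I * (g - l : ℝ) * t) - 1) * expF l t := by
    rw [expF, expF, sub_one_mul, ← Complex.exp_add]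
    congr 2
    push_cast
    ring
  have hterm : ∀ k : ℕ, (2 * π * Complex.I * t) ^ (k + 1) / (k + 1).factorial
      * ((g - l : ℝ) : ℂ) ^ (k + 1) * expF l t
      = (2 * π * Complex.I * (g - l : ℝ) * t) ^ (k + 1) / (k + 1).factorial * expF l t := by
    intro k
    ring
  simp only [hterm, hsplit]
  exact (Complex.hasSum_pow_succ_div_factorial _).mul_right _

lemma hasSum_sum_mul_expF_sub (Λ Γ : ℕ → ℝ) (F : Finset ℕ) (b : ℕ → ℂ) (t : ℝ) :
    HasSum (fun k : ℕ => (2 * π * Complex.I * t) ^ (k + 1) / (k + 1).factorial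
        * ∑ n ∈ F, b n * ((Γ n - Λ n : ℝ) : ℂ) ^ (k + 1) * expF (Λ n) t)
      (∑ n ∈ F, b n * expF (Γ n) t - ∑ n ∈ F, b n * expF (Λ n) t) := by
  have hterm : ∀ k : ℕ, (2 * π * Complex.I * t) ^ (k + 1) / (k + 1).factorial
        * ∑ n ∈ F, b n * ((Γ n - Λ n : ℝ) : ℂ) ^ (k + 1) * expF (Λ n) t
      = ∑ n ∈ F, b n * ((2 * π * Complex.I * t) ^ (k + 1) / (k + 1).factorial
        * ((Γ n - Λ n : ℝ) : ℂ) ^ (k + 1) * expF (Λ n) t) := fun k => by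
    rw [Finset.mul_sum]
    exact Finset.sum_congr rfl fun n _ => by ring
  simp only [hterm, ← Finset.sum_sub_distrib, ← mul_sub]
  exact hasSum_sum fun n _ => (hasSum_expF_sub (Λ n) (Γ n) t).mul_left (b n)

theorem eLpNorm_taylor_term_le {μ : Measure ℝ} {p : ℝ≥0∞} {Λ Γ : ℕ → ℝ} {R η B : ℝ}
    (hR0 : 0 ≤ R) (hR : ∀ᵐ t ∂μ, |t| ≤ R) (hη : ∀ n, |Γ n - Λ n| ≤ η) (hB0 : 0 ≤ B)
    (hB : ∀ (F : Finset ℕ) (b : ℕ → ℂ), eLpNorm (fun t => ∑ n ∈ F, b n * expF (Λ n) t) p μ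
      ≤ ENNReal.ofReal (B * √(∑ n ∈ F, ‖b n‖ ^ 2)))
    (F : Finset ℕ) (b : ℕ → ℂ) (k : ℕ) :
    eLpNorm (fun t => (2 * π * Complex.I * t) ^ k / k.factorial
        * ∑ n ∈ F, b n * ((Γ n - Λ n : ℝ) : ℂ) ^ k * expF (Λ n) t) p μ
      ≤ ENNReal.ofReal (B * √(∑ n ∈ F, ‖b n‖ ^ 2) * ((2 * π * R * η) ^ k / k.factorial)) := by
  have hη0 : 0 ≤ η := (abs_nonneg _).trans (hη 0)
  have hmul : ∀ᵐ t ∂μ, ‖(2 * π * Complex.I * t) ^ k / k.factorial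
        * ∑ n ∈ F, b n * ((Γ n - Λ n : ℝ) : ℂ) ^ k * expF (Λ n) t‖
      ≤ (2 * π * R) ^ k / k.factorial
        * ‖∑ n ∈ F, b n * ((Γ n - Λ n : ℝ) : ℂ) ^ k * expF (Λ n) t‖ := by
    filter_upwards [hR] with t ht
    simp only [norm_mul, norm_div, norm_pow, Complex.norm_natCast, Complex.norm_I,
      Complex.norm_real, Complex.norm_two, Real.norm_eq_abs, abs_of_pos Real.pi_pos, mul_one]
    gcongr
  have hweight : √(∑ n ∈ F, ‖b n * ((Γ n - Λ n : ℝ) : ℂ) ^ k‖ ^ 2)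
      ≤ η ^ k * √(∑ n ∈ F, ‖b n‖ ^ 2) :=
    sqrt_sum_norm_mul_sq_le F b _ (by positivity) fun n => by
      rw [norm_pow, Complex.norm_real, Real.norm_eq_abs]
      exact pow_le_pow_left₀ (abs_nonneg _) (hη n) _
  calc _ ≤ ENNReal.ofReal ((2 * π * R) ^ k / k.factorial)
          * ENNReal.ofReal (B * (η ^ k * √(∑ n ∈ F, ‖b n‖ ^ 2))) :=
        (eLpNorm_le_mul_eLpNorm_of_ae_le_mul hmul p).trans <| mul_le_mul_right
          ((hB F _).trans (ENNReal.ofReal_le_ofReal (mul_le_mul_of_nonneg_left hweight hB0))) _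
    _ = _ := by
        rw [← ENNReal.ofReal_mul (by positivity)]
        congr 1
        rw [mul_pow, mul_pow]
        ring

theorem eLpNorm_sum_mul_expF_sub_le {μ : Measure ℝ} {p : ℝ≥0∞} (hp : 1 ≤ p) {Λ Γ : ℕ → ℝ}
    {R η B : ℝ} (hR0 : 0 ≤ R) (hR : ∀ᵐ t ∂μ, |t| ≤ R) (hη : ∀ n, |Γ n - Λ n| ≤ η) (hB0 : 0 ≤ B)
    (hB : ∀ (F : Finset ℕ) (b : ℕ → ℂ), eLpNorm (fun t => ∑ n ∈ F, b n * expF (Λ n) t) p μ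
      ≤ ENNReal.ofReal (B * √(∑ n ∈ F, ‖b n‖ ^ 2)))
    (F : Finset ℕ) (b : ℕ → ℂ) :
    eLpNorm (fun t => ∑ n ∈ F, b n * expF (Γ n) t - ∑ n ∈ F, b n * expF (Λ n) t) p μ
      ≤ ENNReal.ofReal (B * (Real.exp (2 * π * R * η) - 1) * √(∑ n ∈ F, ‖b n‖ ^ 2)) := by
  have hη0 : 0 ≤ η := (abs_nonneg _).trans (hη 0)
  set s := √(∑ n ∈ F, ‖b n‖ ^ 2)
  set M := 2 * π * R * η
  let term : ℕ → ℝ → ℂ := fun k t => (2 * π * Complex.I * t) ^ (k + 1) / (k + 1).factorial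
    * ∑ n ∈ F, b n * ((Γ n - Λ n : ℝ) : ℂ) ^ (k + 1) * expF (Λ n) t
  have hmeas : ∀ k, AEStronglyMeasurable (term k) μ := fun k => by
    refine Continuous.aestronglyMeasurable ?_
    unfold term expF
    fun_prop
  have hpartial : ∀ K, eLpNorm (∑ k ∈ Finset.range K, term k) p μ
      ≤ ENNReal.ofReal (B * (Real.exp M - 1) * s) := fun K =>
    calc eLpNorm (∑ k ∈ Finset.range K, term k) p μ
        ≤ ∑ k ∈ Finset.range K, eLpNorm (term k) p μ := eLpNorm_sum_le (fun k _ => hmeas k) hp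
      _ ≤ ∑ k ∈ Finset.range K, ENNReal.ofReal (B * s * (M ^ (k + 1) / (k + 1).factorial)) :=
        Finset.sum_le_sum fun k _ => eLpNorm_taylor_term_le hR0 hR hη hB0 hB F b (k + 1)
      _ = ENNReal.ofReal (B * s * ∑ k ∈ Finset.range K, M ^ (k + 1) / (k + 1).factorial) := by
        rw [Finset.mul_sum, ENNReal.ofReal_sum_of_nonneg fun k _ => by positivity]
      _ ≤ ENNReal.ofReal (B * (Real.exp M - 1) * s) := by
        rw [mul_right_comm]
        gcongr
        exact Real.sum_range_pow_succ_div_factorial_le (by positivity) K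
  -- Fatou's lemma for `eLpNorm` carries the bound on the partial sums to the pointwise limit.
  refine Lp.eLpNorm_le_of_ae_tendsto (u := atTop) (Eventually.of_forall hpartial)
    (fun K => Finset.aestronglyMeasurable_sum _ fun k _ => hmeas k) (ae_of_all _ fun t => ?_)
  simpa only [Finset.sum_apply] using (hasSum_sum_mul_expF_sub Λ Γ F b t).tendsto_sum_nat

section ExpL2

variable (μ : Measure ℝ) [IsFiniteMeasure μ]

lemma memLp_expF (p : ℝ≥0∞) (l : ℝ) : MemLp (expF l) p μ :=
  .of_bound (continuous_expF l).aestronglyMeasurable 1 (ae_of_all _ fun t => (norm_expF l t).le)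

noncomputable def expL2 (l : ℝ) : Lp ℂ 2 μ := (memLp_expF μ 2 l).toLp (expF l)

variable {μ}

lemma coeFn_sum_smul_expL2 (Λ : ℕ → ℝ) (F : Finset ℕ) (b : ℕ → ℂ) :
    ⇑(∑ n ∈ F, b n • expL2 μ (Λ n)) =ᵐ[μ] fun t => ∑ n ∈ F, b n * expF (Λ n) t := by
  have h : ∀ᵐ t ∂μ, ∀ n, (b n • expL2 μ (Λ n)) t = b n * expF (Λ n) t :=
    ae_all_iff.2 fun n => by
      filter_upwards [Lp.coeFn_smul (b n) (expL2 μ (Λ n)),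
        (memLp_expF μ 2 (Λ n)).coeFn_toLp] with t h1 h2
      rw [h1, Pi.smul_apply, expL2, h2, smul_eq_mul]
  filter_upwards [Lp.coeFn_finset_sum F fun n => b n • expL2 μ (Λ n), h] with t h1 h2
  simp only [h1, Finset.sum_apply, h2]

lemma norm_sum_smul_expL2_sq (Λ : ℕ → ℝ) (F : Finset ℕ) (b : ℕ → ℂ) :
    ‖∑ n ∈ F, b n • expL2 μ (Λ n)‖ ^ 2 = ∫ t, ‖∑ n ∈ F, b n * expF (Λ n) t‖ ^ 2 ∂μ := by
  rw [L2.norm_sq_eq_integral_norm_sq]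
  exact integral_congr_ae ((coeFn_sum_smul_expL2 Λ F b).mono fun t ht => by simp only [ht])

lemma eLpNorm_sum_mul_expF (Λ : ℕ → ℝ) (F : Finset ℕ) (b : ℕ → ℂ) :
    eLpNorm (fun t => ∑ n ∈ F, b n * expF (Λ n) t) 2 μ
      = ENNReal.ofReal ‖∑ n ∈ F, b n • expL2 μ (Λ n)‖ := by
  rw [Lp.norm_def, ENNReal.ofReal_toReal (Lp.eLpNorm_ne_top _)]
  exact eLpNorm_congr_ae (coeFn_sum_smul_expL2 Λ F b).symm

lemma inner_expL2 (l : ℝ) (g : Lp ℂ 2 μ) :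
    ⟪expL2 μ l, g⟫_ℂ = ∫ t, g t * Complex.exp (-(2 * π * Complex.I * l * t)) ∂μ := by
  rw [L2.inner_def]
  refine integral_congr_ae ((memLp_expF μ 2 l).coeFn_toLp.mono fun t ht => ?_)
  simp only [expL2, ht, RCLike.inner_apply']
  rw [mul_comm, expF, ← Complex.exp_conj]
  simp [Complex.conj_ofReal, map_ofNat]

theorem norm_sum_smul_expL2_sub_le {Λ Γ : ℕ → ℝ} {R η B : ℝ} (hR0 : 0 ≤ R)
    (hR : ∀ᵐ t ∂μ, |t| ≤ R) (hη : ∀ n, |Γ n - Λ n| ≤ η) (hB0 : 0 ≤ B)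
    (hB : ∀ (F : Finset ℕ) (b : ℕ → ℂ),
      ‖∑ n ∈ F, b n • expL2 μ (Λ n)‖ ≤ B * √(∑ n ∈ F, ‖b n‖ ^ 2))
    (F : Finset ℕ) (b : ℕ → ℂ) :
    ‖∑ n ∈ F, b n • expL2 μ (Γ n) - ∑ n ∈ F, b n • expL2 μ (Λ n)‖
      ≤ B * (Real.exp (2 * π * R * η) - 1) * √(∑ n ∈ F, ‖b n‖ ^ 2) := by
  have hη0 : 0 ≤ η := (abs_nonneg _).trans (hη 0)
  have hdiff := eLpNorm_sum_mul_expF_sub_le one_le_two hR0 hR hη hB0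
    (fun F b => (eLpNorm_sum_mul_expF Λ F b).trans_le (ENNReal.ofReal_le_ofReal (hB F b))) F b
  rw [Lp.norm_def, eLpNorm_congr_ae ((Lp.coeFn_sub _ _).trans
    ((coeFn_sum_smul_expL2 Γ F b).sub (coeFn_sum_smul_expL2 Λ F b)))]
  refine ENNReal.toReal_le_of_le_ofReal ?_ hdiff
  have hexp : 0 ≤ Real.exp (2 * π * R * η) - 1 :=
    sub_nonneg.2 (Real.one_le_exp (by positivity))
  positivity

end ExpL2

theorem isExpRieszBasisSeq_iff (S : Set ℝ) [IsFiniteMeasure (volume.restrict S)] (Λ : ℕ → ℝ) :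
    IsExpRieszBasisSeq S Λ ↔
      (∀ g : Lp ℂ 2 (volume.restrict S),
        (∀ n, ⟪expL2 (volume.restrict S) (Λ n), g⟫_ℂ = 0) → g = 0) ∧
      ∃ A B : ℝ, 0 < A ∧ 0 < B ∧ ∀ (F : Finset ℕ) (b : ℕ → ℂ),
        A * √(∑ n ∈ F, ‖b n‖ ^ 2) ≤ ‖∑ n ∈ F, b n • expL2 (volume.restrict S) (Λ n)‖ ∧
        ‖∑ n ∈ F, b n • expL2 (volume.restrict S) (Λ n)‖ ≤ B * √(∑ n ∈ F, ‖b n‖ ^ 2) := by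
  unfold IsExpRieszBasisSeq
  refine and_congr ⟨fun h g hg => ?_, fun h f hf hint => ?_⟩ ?_
  · exact (Lp.eq_zero_iff_ae_eq_zero).2
      (h g (Lp.memLp g) fun n => (inner_expL2 (Λ n) g).symm.trans (hg n))
  · have h0 := h (hf.toLp f) fun n => by
      rw [inner_expL2, ← hint n]
      exact integral_congr_ae (hf.coeFn_toLp.mono fun t ht => by simp only [ht])
    filter_upwards [hf.coeFn_toLp, (Lp.eq_zero_iff_ae_eq_zero).1 h0] with t h1 h2
    rw [← h1, h2, Pi.zero_apply]
  have hiff := fun P => Finsupp.forall_sum_iff_forall_finset (g := fun _ (z : ℂ) => ‖z‖ ^ 2)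
    (h := fun n (z : ℂ) => z • expL2 (volume.restrict S) (Λ n)) (by simp) (by simp) P
  simp only [← norm_sum_smul_expL2_sq]
  constructor
  · rintro ⟨c, C, hc, hC, hbounds⟩
    refine ⟨√c, √C, Real.sqrt_pos.2 hc, Real.sqrt_pos.2 hC, fun F b => ?_⟩
    obtain ⟨hlow, hup⟩ := (hiff fun s x => c * s ≤ ‖x‖ ^ 2 ∧ ‖x‖ ^ 2 ≤ C * s).1 hbounds F b
    have hs : 0 ≤ ∑ n ∈ F, ‖b n‖ ^ 2 := by positivity
    rw [mul_sqrt_le_iff_sq (Real.sqrt_nonneg _) hs (norm_nonneg _),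
      le_mul_sqrt_iff_sq (Real.sqrt_nonneg _) hs (norm_nonneg _),
      Real.sq_sqrt hc.le, Real.sq_sqrt hC.le]
    exact ⟨hlow, hup⟩
  · rintro ⟨A, B, hA, hB, hbounds⟩
    refine ⟨A ^ 2, B ^ 2, by positivity, by positivity,
      (hiff fun s x => A ^ 2 * s ≤ ‖x‖ ^ 2 ∧ ‖x‖ ^ 2 ≤ B ^ 2 * s).2 fun F b => ?_⟩
    have hs : 0 ≤ ∑ n ∈ F, ‖b n‖ ^ 2 := by positivity
    rw [← mul_sqrt_le_iff_sq hA.le hs (norm_nonneg _),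
      ← le_mul_sqrt_iff_sq hB.le hs (norm_nonneg _)]
    exact hbounds F b

theorem paley_wiener_stability_general (S : Set ℝ)
    (hSb : Bornology.IsBounded S)
    (Λ : ℕ → ℝ) (hRB : IsExpRieszBasisSeq S Λ) :
    ∃ η : ℝ, 0 < η ∧ ∀ Γ : ℕ → ℝ, (∀ n, |Λ n - Γ n| < η) →
      IsExpRieszBasisSeq S Γ := by
  have : IsFiniteMeasure (volume.restrict S) := isFiniteMeasure_restrict.2 hSb.measure_lt_top.ne
  obtain ⟨hcomplete, A, B, hA, hB, hbounds⟩ := (isExpRieszBasisSeq_iff S Λ).1 hRB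
  obtain ⟨R, hR0, hSR⟩ := hSb.subset_closedBall_lt 0 0
  have hR : ∀ᵐ t ∂volume.restrict S, |t| ≤ R :=
    ae_restrict_of_ae_restrict_of_subset hSR <| (ae_restrict_mem measurableSet_closedBall).mono
      fun t ht => by simpa using ht
  obtain ⟨η, hη, hηB⟩ := exists_pos_mul_exp_sub_one_le B (2 * π * R) (half_pos hA)
  refine ⟨η, hη, fun Γ hΓ => (isExpRieszBasisSeq_iff S Γ).2 ?_⟩
  set e := expL2 (volume.restrict S)
  have hpert : ∀ (F : Finset ℕ) (b : ℕ → ℂ),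
      ‖∑ n ∈ F, b n • e (Γ n) - ∑ n ∈ F, b n • e (Λ n)‖ ≤ 1 / 2 * ‖∑ n ∈ F, b n • e (Λ n)‖ :=
    fun F b => calc
      _ ≤ B * (Real.exp (2 * π * R * η) - 1) * √(∑ n ∈ F, ‖b n‖ ^ 2) :=
        norm_sum_smul_expL2_sub_le hR0.le hR (fun n => (abs_sub_comm _ _).trans_le (hΓ n).le)
          hB.le (fun F b => (hbounds F b).2) F b
      _ ≤ A / 2 * √(∑ n ∈ F, ‖b n‖ ^ 2) := by gcongr
      _ ≤ 1 / 2 * ‖∑ n ∈ F, b n • e (Λ n)‖ := by linarith [(hbounds F b).1]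
  refine ⟨fun g hg => eq_zero_of_forall_inner_eq_zero_of_norm_sum_sub_le (by norm_num) hpert
    hcomplete hg, A / 2, 3 / 2 * B, by positivity, by positivity, fun F b => ?_⟩
  obtain ⟨hlow, hup⟩ := le_norm_and_norm_le_of_norm_sub_le (hpert F b)
  constructor <;> linarith [hbounds F b]

/-- Paley–Wiener stability: a real perturbation of a Riesz basis of exponentials of
`L²(S)`, `S` bounded of positive measure, smaller than some `η = η(S,Λ) > 0`,
is again a Riesz basis of exponentials. -/
theorem paley_wiener_stability (S : Set ℝ) (hSm : MeasurableSet S)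
    (hSb : Bornology.IsBounded S) (hS0 : 0 < volume S)
    (Λ : ℕ → ℝ) (hRB : IsExpRieszBasisSeq S Λ) :
    ∃ η : ℝ, 0 < η ∧ ∀ Γ : ℕ → ℝ, (∀ n, |Λ n - Γ n| < η) →
      IsExpRieszBasisSeq S Γ :=
  paley_wiener_stability_general S hSb Λ hRB
end

section
/- Let a_1 ≤ … ≤ a_L and b_1 ≤ … ≤ b_L be 2L numbers in [0,1]. Define Φ(t) = Σ_{l=1}^L 1_{[0,b_l]}(t) + Σ_{l=1}^L 1_{[a_l,1]}(t) and A_{≥n} = Φ^{-1}([n, 2L]) for 1 ≤ n ≤ 2L. Then each set A_{≥n} is a union of at most L intervals of the circle ℝ/ℤ. Moreover, if some A_{≥n} is a union of exactly L such intervals, then the sequences (a_l) and (b_l) interlace: either a_1 ≤ b_1 ≤ a_2 ≤ b_2 ≤ … or b_1 ≤ a_1 ≤ b_2 ≤ a_2 ≤ … -/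
/-! For `t ∈ [0,1]`, `Φ(t) ≥ n` iff for some `i + k = n` at least `i` of the `a_l` lie below
`t` and at least `k` of the `b_l` lie above it. By monotonicity this says `t ∈ [a_i, b_{L+1-k}]`
(with `a_0 = 0`, `b_{L+1} = 1`), so `A_{≥n}` is a chain of closed intervals with nondecreasing
endpoints: `min(n, 2L - n) + 1` of them. When `n ≤ L` the first starts at `0` and the last ends
at `1`, so they form a single arc, leaving at most `L` arcs in every case, and fewer than `L`
unless `n ∈ {L, L + 1}`. In those two cases an empty interval of the chain can be dropped and
two consecutive overlapping intervals can be merged, each time saving an arc; if neither applies,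
the sequences interlace. -/

/-- A cyclic interval (arc) of the circle obtained from `[0,1]` by identifying the
endpoints: either an ordinary interval `[x,y]` or a wrap-around `[x,1] ∪ [0,y]`. -/
def CyclicInterval (x y : ℝ) : Set ℝ :=
  if x ≤ y then Set.Icc x y else Set.Icc x 1 ∪ Set.Icc 0 y

/-- `Φ(t) = Σ_l 1_{[0,b_l]}(t) + Σ_l 1_{[a_l,1]}(t)` for `t ∈ [0,1]`. -/
noncomputable def PhiFn (L : ℕ) (a b : Fin L → ℝ) (t : ℝ) : ℕ :=
  Set.ncard {l : Fin L | 0 ≤ t ∧ t ≤ b l} + Set.ncard {l : Fin L | a l ≤ t ∧ t ≤ 1}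

/-- `A_{≥n} = Φ^{-1}([n, 2L])`, within `[0,1]`. -/
noncomputable def AgeqPhi (L : ℕ) (a b : Fin L → ℝ) (n : ℕ) : Set ℝ :=
  {t ∈ Set.Icc (0 : ℝ) 1 | n ≤ PhiFn L a b t ∧ PhiFn L a b t ≤ 2 * L}

/-- The sequences `u` and `v` interlace in the order `u_1 ≤ v_1 ≤ u_2 ≤ v_2 ≤ …`. -/
def InterlaceLe (L : ℕ) (u v : Fin L → ℝ) : Prop :=
  (∀ i, u i ≤ v i) ∧ ∀ i : Fin L, ∀ h : i.val + 1 < L, v i ≤ u ⟨i.val + 1, h⟩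

open Set

def IsUnionOfArcs (k : ℕ) (S : Set ℝ) : Prop :=
  ∃ P : Finset (ℝ × ℝ), P.card ≤ k ∧ S = ⋃ p ∈ P, CyclicInterval p.1 p.2

namespace IsUnionOfArcs

variable {k l : ℕ} {S T : Set ℝ}

theorem exists_fin (h : IsUnionOfArcs k S) :
    ∃ m ≤ k, ∃ x y : Fin m → ℝ, S = ⋃ i, CyclicInterval (x i) (y i) := by
  obtain ⟨P, hP, rfl⟩ := h
  refine ⟨P.card, hP, fun i => (P.equivFin.symm i).1.1, fun i => (P.equivFin.symm i).1.2, ?_⟩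
  rw [← Finset.set_biUnion_coe, Set.biUnion_eq_iUnion]
  exact (P.equivFin.symm.surjective.iUnion_comp (fun p : P => CyclicInterval p.1.1 p.1.2)).symm

theorem mono (h : IsUnionOfArcs k S) (hkl : k ≤ l) : IsUnionOfArcs l S :=
  let ⟨P, hP, hS⟩ := h
  ⟨P, hP.trans hkl, hS⟩

theorem union (hS : IsUnionOfArcs k S) (hT : IsUnionOfArcs l T) :
    IsUnionOfArcs (k + l) (S ∪ T) := by
  classical
  obtain ⟨P, hP, rfl⟩ := hS
  obtain ⟨Q, hQ, rfl⟩ := hT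
  exact ⟨P ∪ Q, (Finset.card_union_le P Q).trans (add_le_add hP hQ),
    (Finset.set_biUnion_union P Q _).symm⟩

theorem biUnion {ι : Type*} {s : Finset ι} {F : ι → Set ℝ}
    (hF : ∀ i ∈ s, IsUnionOfArcs 1 (F i)) : IsUnionOfArcs s.card (⋃ i ∈ s, F i) := by
  classical
  induction s using Finset.induction_on with
  | empty => exact ⟨∅, le_rfl, by simp⟩
  | insert i s hi ih =>
    rw [Finset.set_biUnion_insert, Finset.card_insert_of_notMem hi, add_comm]
    exact (hF i (Finset.mem_insert_self i s)).union
      (ih fun j hj => hF j (Finset.mem_insert_of_mem hj))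

end IsUnionOfArcs

theorem isUnionOfArcs_cyclicInterval (x y : ℝ) : IsUnionOfArcs 1 (CyclicInterval x y) :=
  ⟨{(x, y)}, le_rfl, by simp⟩

theorem isUnionOfArcs_Icc (x y : ℝ) : IsUnionOfArcs 1 (Icc x y) := by
  by_cases hxy : x ≤ y
  · simpa [CyclicInterval, hxy] using isUnionOfArcs_cyclicInterval x y
  · exact ⟨∅, zero_le_one, by simp [Icc_eq_empty hxy]⟩

theorem isUnionOfArcs_Icc_union_Icc {x y : ℝ} (hx : 0 ≤ x) (hy : y ≤ 1) :
    IsUnionOfArcs 1 (Icc 0 y ∪ Icc x 1) := by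
  by_cases hxy : x ≤ y
  · have h : Icc 0 y ∪ Icc x 1 = CyclicInterval 0 1 := by
      rw [CyclicInterval, if_pos zero_le_one, Icc_union_Icc' hxy zero_le_one, min_eq_left hx,
        max_eq_right hy]
    exact h ▸ isUnionOfArcs_cyclicInterval 0 1
  · have h : Icc 0 y ∪ Icc x 1 = CyclicInterval x y := by
      rw [CyclicInterval, if_neg hxy, union_comm]
    exact h ▸ isUnionOfArcs_cyclicInterval x y

def chainUnion (m : ℕ) (α β : ℕ → ℝ) : Set ℝ := ⋃ j ∈ Finset.range m, Icc (α j) (β j)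

def skipIndex (i j : ℕ) : ℕ := if j < i then j else j + 1

section Chain

variable {m i : ℕ} {α β : ℕ → ℝ} {t : ℝ}

theorem mem_chainUnion : t ∈ chainUnion m α β ↔ ∃ j < m, α j ≤ t ∧ t ≤ β j := by
  simp only [chainUnion, mem_iUnion, Finset.mem_range, mem_Icc, exists_prop]

theorem isUnionOfArcs_chainUnion (m : ℕ) (α β : ℕ → ℝ) :
    IsUnionOfArcs m (chainUnion m α β) := by
  have h := IsUnionOfArcs.biUnion (s := Finset.range m) fun j _ => isUnionOfArcs_Icc (α j) (β j)
  rwa [Finset.card_range] at h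

theorem chainUnion_succ_of_lt (hi : i ≤ m) (h : β i < α i) :
    chainUnion (m + 1) α β = chainUnion m (α ∘ skipIndex i) (β ∘ skipIndex i) := by
  ext t
  simp only [mem_chainUnion, Function.comp_apply, skipIndex]
  constructor
  · rintro ⟨j, hj, ht⟩
    have hji : j ≠ i := by rintro rfl; linarith [ht.1, ht.2]
    rcases lt_or_gt_of_ne hji with hji | hji
    · exact ⟨j, by omega, by simpa [hji] using ht⟩
    · refine ⟨j - 1, by omega, ?_⟩
      simpa [show ¬ j - 1 < i by omega, Nat.sub_add_cancel (show 1 ≤ j by omega)] using ht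
  · rintro ⟨j, hj, ht⟩
    split_ifs at ht
    · exact ⟨j, by omega, ht⟩
    · exact ⟨j + 1, by omega, ht⟩

theorem chainUnion_succ_of_le (hα : Monotone α) (hβ : Monotone β) (hi : i < m)
    (h : α (i + 1) ≤ β i) :
    chainUnion (m + 1) α β = chainUnion m (α ∘ skipIndex (i + 1)) (β ∘ skipIndex i) := by
  ext t
  simp only [mem_chainUnion, Function.comp_apply, skipIndex]
  constructor
  · rintro ⟨j, hj, ht⟩
    rcases lt_trichotomy j i with hji | rfl | hji
    · exact ⟨j, by omega, by simpa [hji, show j < i + 1 by omega] using ht⟩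
    · exact ⟨j, by omega, by simpa using ⟨ht.1, ht.2.trans (hβ j.le_succ)⟩⟩
    · rcases (Nat.succ_le_of_lt hji).eq_or_lt with rfl | hji
      · exact ⟨i, hi, by simpa using ⟨(hα i.le_succ).trans ht.1, ht.2⟩⟩
      · refine ⟨j - 1, by omega, ?_⟩
        simpa [show ¬ j - 1 < i + 1 by omega, show ¬ j - 1 < i by omega,
          Nat.sub_add_cancel (show 1 ≤ j by omega)] using ht
  · rintro ⟨j, hj, ht⟩
    rcases lt_trichotomy j i with hji | rfl | hji
    · exact ⟨j, by omega, by simpa [hji, show j < i + 1 by omega] using ht⟩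
    · simp only [lt_add_iff_pos_right, zero_lt_one, if_true, lt_irrefl, if_false] at ht
      by_cases htj : t ≤ β j
      · exact ⟨j, by omega, ht.1, htj⟩
      · exact ⟨j + 1, by omega, h.trans (not_le.1 htj).le, ht.2⟩
    · exact ⟨j + 1, by omega, by simpa [show ¬ j < i + 1 by omega, show ¬ j < i by omega]
        using ht⟩

theorem chainUnion_add_two :
    chainUnion (m + 2) α β = (Icc (α 0) (β 0) ∪ Icc (α (m + 1)) (β (m + 1))) ∪
      chainUnion m (α ∘ (· + 1)) (β ∘ (· + 1)) := by
  ext t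
  simp only [mem_chainUnion, mem_union, mem_Icc, Function.comp_apply]
  constructor
  · rintro ⟨j, hj, ht⟩
    rcases Nat.eq_zero_or_pos j with rfl | hj0
    · exact Or.inl (Or.inl ht)
    · rcases (Nat.le_of_lt_succ hj).eq_or_lt with rfl | hjm
      · exact Or.inl (Or.inr ht)
      · exact Or.inr ⟨j - 1, by omega, by rwa [Nat.sub_add_cancel hj0]⟩
  · rintro ((ht | ht) | ⟨j, hj, ht⟩)
    · exact ⟨0, by omega, ht⟩
    · exact ⟨m + 1, by omega, ht⟩
    · exact ⟨j + 1, by omega, ht⟩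

theorem isUnionOfArcs_chainUnion_of_wrap (h0 : α 0 = 0) (h1 : β (m + 1) = 1)
    (hα : 0 ≤ α (m + 1)) (hβ : β 0 ≤ 1) : IsUnionOfArcs (m + 1) (chainUnion (m + 2) α β) := by
  rw [chainUnion_add_two, h0, h1]
  exact ((isUnionOfArcs_Icc_union_Icc hα hβ).union (isUnionOfArcs_chainUnion _ _ _)).mono
    (by omega)

theorem le_of_not_isUnionOfArcs_chainUnion (hne : ¬ IsUnionOfArcs m (chainUnion (m + 1) α β))
    (hi : i ≤ m) : α i ≤ β i := by
  by_contra h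
  rw [chainUnion_succ_of_lt hi (not_le.1 h)] at hne
  exact hne (isUnionOfArcs_chainUnion _ _ _)

theorem lt_of_not_isUnionOfArcs_chainUnion (hα : Monotone α) (hβ : Monotone β)
    (hne : ¬ IsUnionOfArcs m (chainUnion (m + 1) α β)) (hi : i < m) : β i < α (i + 1) := by
  by_contra h
  rw [chainUnion_succ_of_le hα hβ hi (not_lt.1 h)] at hne
  exact hne (isUnionOfArcs_chainUnion _ _ _)

section Wrap

variable (h0 : α 0 = 0) (h1 : β (m + 2) = 1) (hα0 : ∀ j, 0 ≤ α j) (hβ1 : ∀ j, β j ≤ 1)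
include h0 h1 hα0 hβ1

theorem le_of_not_isUnionOfArcs_chainUnion_of_wrap
    (hne : ¬ IsUnionOfArcs (m + 1) (chainUnion (m + 3) α β)) (hi0 : 0 < i) (hi : i ≤ m + 1) :
    α i ≤ β i := by
  by_contra h
  rw [chainUnion_succ_of_lt (by omega) (not_le.1 h)] at hne
  refine hne (isUnionOfArcs_chainUnion_of_wrap ?_ ?_ (hα0 _) (hβ1 _)) <;>
    simpa only [Function.comp_apply, skipIndex, if_pos hi0, if_neg (show ¬ m + 1 < i by omega)]

theorem lt_of_not_isUnionOfArcs_chainUnion_of_wrap (hα : Monotone α) (hβ : Monotone β)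
    (hne : ¬ IsUnionOfArcs (m + 1) (chainUnion (m + 3) α β)) (hi : i ≤ m + 1) :
    β i < α (i + 1) := by
  by_contra h
  rw [chainUnion_succ_of_le hα hβ (by omega) (not_lt.1 h)] at hne
  refine hne (isUnionOfArcs_chainUnion_of_wrap ?_ ?_ (hα0 _) (hβ1 _)) <;>
    simpa only [Function.comp_apply, skipIndex, if_pos (Nat.succ_pos i),
      if_neg (show ¬ m + 1 < i by omega)]

end Wrap

end Chain

theorem IsLowerSet.mem_iff_lt_ncard {L : ℕ} {S : Set (Fin L)} (hS : IsLowerSet S) (i : Fin L) :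
    i ∈ S ↔ (i : ℕ) < S.ncard := by
  constructor
  · intro hi
    have h := Set.ncard_le_ncard (fun j (hj : j ∈ Iic i) => hS hj hi) (Set.toFinite S)
    rwa [← Finset.coe_Iic, ncard_coe_finset, Fin.card_Iic] at h
  · intro hi
    by_contra hiS
    have h := Set.ncard_le_ncard (t := Iio i) fun j hj => lt_of_not_ge fun hij => hiS (hS hij hj)
    rw [← Finset.coe_Iio, ncard_coe_finset, Fin.card_Iio] at h
    omega

theorem IsUpperSet.mem_iff_le_add_ncard {L : ℕ} {S : Set (Fin L)} (hS : IsUpperSet S)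
    (i : Fin L) : i ∈ S ↔ L ≤ i + S.ncard := by
  have h := Set.ncard_add_ncard_compl S
  rw [Nat.card_eq_fintype_card, Fintype.card_fin] at h
  rw [← not_iff_not, ← mem_compl_iff, hS.compl.mem_iff_lt_ncard]
  omega

variable {L : ℕ}

-- Padding with `1` past the end keeps both sequences monotone.
def leftEnd (a : Fin L → ℝ) : ℕ → ℝ
  | 0 => 0
  | i + 1 => if h : i < L then a ⟨i, h⟩ else 1

def rightEnd (b : Fin L → ℝ) (k : ℕ) : ℝ := if h : k < L then b ⟨k, h⟩ else 1

section Ends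

variable {a b : Fin L → ℝ} {t : ℝ}

theorem leftEnd_nonneg (ha : ∀ l, 0 ≤ a l) : ∀ i, 0 ≤ leftEnd a i
  | 0 => le_rfl
  | i + 1 => by simp only [leftEnd]; split_ifs <;> simp [ha]

theorem rightEnd_le_one (hb : ∀ l, b l ≤ 1) (k : ℕ) : rightEnd b k ≤ 1 := by
  unfold rightEnd; split_ifs <;> simp [hb]

theorem monotone_leftEnd (ha : Monotone a) (ha0 : ∀ l, 0 ≤ a l) (ha1 : ∀ l, a l ≤ 1) :
    Monotone (leftEnd a) := by
  refine monotone_nat_of_le_succ fun i => ?_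
  rcases i with _ | i
  · exact leftEnd_nonneg ha0 1
  · simp only [leftEnd]
    split_ifs with h h' h'
    · exact ha (Fin.mk_le_mk.2 i.le_succ)
    · exact ha1 _
    · omega
    · exact le_rfl

theorem monotone_rightEnd (hb : Monotone b) (hb1 : ∀ l, b l ≤ 1) : Monotone (rightEnd b) := by
  refine monotone_nat_of_le_succ fun k => ?_
  simp only [rightEnd]
  split_ifs with h h'
  · exact hb (Fin.mk_le_mk.2 k.le_succ)
  · exact hb1 _
  · omega
  · exact le_rfl

theorem leftEnd_le_iff (ha : Monotone a) (ht : 0 ≤ t) {i : ℕ} (hi : i ≤ L) :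
    leftEnd a i ≤ t ↔ i ≤ {l | a l ≤ t}.ncard := by
  rcases i with _ | i
  · simpa [leftEnd] using ht
  · have hS : IsLowerSet {l | a l ≤ t} := fun _ _ hlm hm => (ha hlm).trans hm
    simpa [leftEnd, show i < L by omega] using hS.mem_iff_lt_ncard ⟨i, by omega⟩

theorem le_rightEnd_iff (hb : Monotone b) (ht : t ≤ 1) {k : ℕ} (hk : k ≤ L) :
    t ≤ rightEnd b k ↔ L ≤ k + {l | t ≤ b l}.ncard := by
  rcases hk.lt_or_eq with hk | rfl
  · have hS : IsUpperSet {l | t ≤ b l} := fun _ _ hlm hl => hl.trans (hb hlm)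
    simpa [rightEnd, hk] using hS.mem_iff_le_add_ncard ⟨k, hk⟩
  · simpa [rightEnd] using ht

end Ends

section Decomposition

variable {a b : Fin L → ℝ} {n : ℕ} {t : ℝ}

theorem phiFn_eq_ncard_add_ncard (ht : t ∈ Icc 0 1) :
    PhiFn L a b t = {l | t ≤ b l}.ncard + {l | a l ≤ t}.ncard := by
  simp [PhiFn, ht.1, ht.2]

theorem mem_ageqPhi_iff :
    t ∈ AgeqPhi L a b n ↔ t ∈ Icc 0 1 ∧ n ≤ {l | t ≤ b l}.ncard + {l | a l ≤ t}.ncard := by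
  refine and_congr_right fun ht => ?_
  have := (ncard_le_card {l | t ≤ b l}).trans_eq (Nat.card_fin L)
  have := (ncard_le_card {l | a l ≤ t}).trans_eq (Nat.card_fin L)
  rw [phiFn_eq_ncard_add_ncard ht]
  omega

variable (ha : Monotone a) (hb : Monotone b) (ha0 : ∀ l, 0 ≤ a l) (hb1 : ∀ l, b l ≤ 1)
include ha hb ha0 hb1

theorem mem_ageqPhi_iff_exists : t ∈ AgeqPhi L a b n ↔
    ∃ i ≤ L, ∃ k ≤ L, i + L = n + k ∧ leftEnd a i ≤ t ∧ t ≤ rightEnd b k := by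
  rw [mem_ageqPhi_iff]
  constructor
  · rintro ⟨⟨ht0, ht1⟩, hn⟩
    have := (ncard_le_card {l | t ≤ b l}).trans_eq (Nat.card_fin L)
    have := (ncard_le_card {l | a l ≤ t}).trans_eq (Nat.card_fin L)
    refine ⟨min {l | a l ≤ t}.ncard n, by omega, min {l | a l ≤ t}.ncard n + L - n, by omega,
      by omega, (leftEnd_le_iff ha ht0 (by omega)).2 (by omega),
      (le_rightEnd_iff hb ht1 (by omega)).2 (by omega)⟩
  · rintro ⟨i, hi, k, hk, hik, hat, htb⟩
    have ht0 := (leftEnd_nonneg ha0 i).trans hat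
    have ht1 := htb.trans (rightEnd_le_one hb1 k)
    have := (leftEnd_le_iff ha ht0 hi).1 hat
    have := (le_rightEnd_iff hb ht1 hk).1 htb
    exact ⟨⟨ht0, ht1⟩, by omega⟩

theorem ageqPhi_eq_chainUnion_of_le (hn : n ≤ L) :
    AgeqPhi L a b n = chainUnion (n + 1) (leftEnd a) (fun i => rightEnd b (i + (L - n))) := by
  ext t
  rw [mem_ageqPhi_iff_exists ha hb ha0 hb1, mem_chainUnion]
  constructor
  · rintro ⟨i, -, k, hk, hik, ht⟩
    obtain rfl : k = i + (L - n) := by omega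
    exact ⟨i, by omega, ht⟩
  · rintro ⟨i, hi, ht⟩
    exact ⟨i, by omega, i + (L - n), by omega, by omega, ht⟩

theorem ageqPhi_eq_chainUnion_of_ge (hn : L ≤ n) :
    AgeqPhi L a b n =
      chainUnion (2 * L + 1 - n) (fun k => leftEnd a (k + (n - L))) (rightEnd b) := by
  ext t
  rw [mem_ageqPhi_iff_exists ha hb ha0 hb1, mem_chainUnion]
  constructor
  · rintro ⟨i, hi, k, -, hik, ht⟩
    obtain rfl : i = k + (n - L) := by omega
    exact ⟨k, by omega, ht⟩
  · rintro ⟨k, hk, ht⟩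
    exact ⟨k + (n - L), by omega, k, by omega, by omega, ht⟩

end Decomposition

section Interlacing

variable {a b : Fin L → ℝ} {n : ℕ} (ha : Monotone a) (hb : Monotone b) (ha0 : ∀ l, 0 ≤ a l)
  (hb1 : ∀ l, b l ≤ 1)
include ha hb ha0 hb1

theorem isUnionOfArcs_ageqPhi_of_le (hn0 : 1 ≤ n) (hn : n ≤ L) :
    IsUnionOfArcs n (AgeqPhi L a b n) := by
  obtain ⟨m, rfl⟩ : ∃ m, n = m + 1 := ⟨n - 1, by omega⟩
  rw [ageqPhi_eq_chainUnion_of_le ha hb ha0 hb1 hn]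
  refine isUnionOfArcs_chainUnion_of_wrap rfl ?_ (leftEnd_nonneg ha0 _) (rightEnd_le_one hb1 _)
  simp [rightEnd, show m + 1 + (L - (m + 1)) = L by omega]

theorem isUnionOfArcs_ageqPhi_of_ge (hn : L ≤ n) :
    IsUnionOfArcs (2 * L + 1 - n) (AgeqPhi L a b n) := by
  rw [ageqPhi_eq_chainUnion_of_ge ha hb ha0 hb1 hn]
  exact isUnionOfArcs_chainUnion _ _ _

theorem interlaceLe_of_not_isUnionOfArcs_ageqPhi_succ (ha1 : ∀ l, a l ≤ 1)
    (hne : ¬ IsUnionOfArcs (L - 1) (AgeqPhi L a b (L + 1))) : InterlaceLe L a b := by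
  rcases L with _ | m
  · exact ⟨fun i => i.elim0, fun i => i.elim0⟩
  rw [ageqPhi_eq_chainUnion_of_ge ha hb ha0 hb1 (by omega),
    show 2 * (m + 1) + 1 - (m + 1 + 1) = m + 1 by omega, Nat.add_sub_cancel_left,
    Nat.add_sub_cancel] at hne
  have hα : Monotone fun k => leftEnd a (k + 1) :=
    (monotone_leftEnd ha ha0 ha1).comp fun _ _ h => by omega
  refine ⟨fun i => ?_, fun i hi => ?_⟩
  · simpa [leftEnd, rightEnd, i.is_le] using le_of_not_isUnionOfArcs_chainUnion hne i.is_le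
  · simpa [leftEnd, rightEnd, hi, i.is_le] using (lt_of_not_isUnionOfArcs_chainUnion hα
      (monotone_rightEnd hb hb1) hne (i := i) (by omega)).le

theorem interlaceLe_of_not_isUnionOfArcs_ageqPhi_self (ha1 : ∀ l, a l ≤ 1) (hL : 2 ≤ L)
    (hne : ¬ IsUnionOfArcs (L - 1) (AgeqPhi L a b L)) : InterlaceLe L b a := by
  obtain ⟨m, rfl⟩ : ∃ m, L = m + 2 := ⟨L - 2, by omega⟩
  rw [ageqPhi_eq_chainUnion_of_le ha hb ha0 hb1 le_rfl, Nat.sub_self,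
    show m + 2 - 1 = m + 1 by omega] at hne
  simp only [add_zero] at hne
  have h1 : rightEnd b (m + 2) = 1 := by simp [rightEnd]
  refine ⟨fun i => ?_, fun i hi => ?_⟩
  · simpa [leftEnd, rightEnd] using (lt_of_not_isUnionOfArcs_chainUnion_of_wrap rfl h1
      (leftEnd_nonneg ha0) (rightEnd_le_one hb1) (monotone_leftEnd ha ha0 ha1)
      (monotone_rightEnd hb hb1) hne i.is_le).le
  · simpa [leftEnd, rightEnd, hi] using le_of_not_isUnionOfArcs_chainUnion_of_wrap rfl h1
      (leftEnd_nonneg ha0) (rightEnd_le_one hb1) hne (Nat.succ_pos i) (by omega)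

end Interlacing

theorem interlaceLe_or_interlaceLe_of_le_one (hL : L ≤ 1) (u v : Fin L → ℝ) :
    InterlaceLe L u v ∨ InterlaceLe L v u := by
  rcases L with _ | _ | L
  · exact Or.inl ⟨fun i => i.elim0, fun i => i.elim0⟩
  · rcases le_total (u 0) (v 0) with h | h
    · exact Or.inl ⟨fun i => by simpa [Fin.fin_one_eq_zero i] using h, fun i hi => by omega⟩
    · exact Or.inr ⟨fun i => by simpa [Fin.fin_one_eq_zero i] using h, fun i hi => by omega⟩
  · omega

theorem Ageq_union_of_cyclic_intervals_general (L : ℕ) (a b : Fin L → ℝ)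
    (ha : Monotone a) (hb : Monotone b)
    (haI : ∀ l, a l ∈ Set.Icc (0 : ℝ) 1) (hbI : ∀ l, b l ∈ Set.Icc (0 : ℝ) 1) :
    (∀ n, 1 ≤ n → n ≤ 2 * L → ∃ k ≤ L, ∃ x y : Fin k → ℝ,
        AgeqPhi L a b n = ⋃ i, CyclicInterval (x i) (y i)) ∧
    ((∃ n, 1 ≤ n ∧ n ≤ 2 * L ∧ ∀ k < L, ∀ x y : Fin k → ℝ,
        AgeqPhi L a b n ≠ ⋃ i, CyclicInterval (x i) (y i)) →
      InterlaceLe L a b ∨ InterlaceLe L b a) := by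
  have ha0 l := (haI l).1
  have ha1 l := (haI l).2
  have hb1 l := (hbI l).2
  have hle n := isUnionOfArcs_ageqPhi_of_le (n := n) ha hb ha0 hb1
  have hge n := isUnionOfArcs_ageqPhi_of_ge (n := n) ha hb ha0 hb1
  refine ⟨fun n hn1 _ => ?_, ?_⟩
  · rcases le_or_gt n L with hn | hn
    · exact ((hle n hn1 hn).mono hn).exists_fin
    · exact ((hge n hn.le).mono (by omega)).exists_fin
  rintro ⟨n, hn1, hn2, hA⟩
  have hne : ¬ IsUnionOfArcs (L - 1) (AgeqPhi L a b n) := fun h => by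
    obtain ⟨k, hk, x, y, hxy⟩ := h.exists_fin
    exact hA k (by omega) x y hxy
  rcases lt_trichotomy n L with hn | rfl | hn
  · exact absurd ((hle n hn1 hn.le).mono (by omega)) hne
  · rcases le_or_gt n 1 with h1 | h2
    · exact interlaceLe_or_interlaceLe_of_le_one h1 a b
    · exact Or.inr (interlaceLe_of_not_isUnionOfArcs_ageqPhi_self ha hb ha0 hb1 ha1 h2 hne)
  · rcases (Nat.succ_le_of_lt hn).eq_or_lt with rfl | hn
    · exact Or.inl (interlaceLe_of_not_isUnionOfArcs_ageqPhi_succ ha hb ha0 hb1 ha1 hne)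
    · exact absurd ((hge n (by omega)).mono (by omega)) hne

/-- Each `A_{≥n}` is a union of at most `L` cyclic intervals; moreover, if some
`A_{≥n}` cannot be written as a union of fewer than `L` cyclic intervals, then the
sequences `(a_l)` and `(b_l)` interlace. -/
theorem Ageq_union_of_cyclic_intervals (L : ℕ) (hL : 0 < L) (a b : Fin L → ℝ)
    (ha : Monotone a) (hb : Monotone b)
    (haI : ∀ l, a l ∈ Set.Icc (0 : ℝ) 1) (hbI : ∀ l, b l ∈ Set.Icc (0 : ℝ) 1) :
    (∀ n, 1 ≤ n → n ≤ 2 * L → ∃ k ≤ L, ∃ x y : Fin k → ℝ,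
        AgeqPhi L a b n = ⋃ i, CyclicInterval (x i) (y i)) ∧
    ((∃ n, 1 ≤ n ∧ n ≤ 2 * L ∧ ∀ k < L, ∀ x y : Fin k → ℝ,
        AgeqPhi L a b n ≠ ⋃ i, CyclicInterval (x i) (y i)) →
      InterlaceLe L a b ∨ InterlaceLe L b a) :=
  Ageq_union_of_cyclic_intervals_general L a b ha hb haI hbI
end

section
/- Let a_1,…,a_L, b_1,…,b_L ∈ ℝ and N ∈ ℕ be such that the fractional parts {Na_j} and {Nb_j} interlace cyclically on ℝ/ℤ. Then |Σ_{j=1}^L e^{2πiNa_j} − Σ_{j=1}^L e^{2πiNb_j}|² ≤ 4. -/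
/-- The `2L` points with fractional parts of `u i` and `v i` interlace cyclically on
`ℝ/ℤ`: after a common rotation by `x`, they can be ordered
`{u_{σ(1)}+x} ≤ {v_{τ(1)}+x} ≤ {u_{σ(2)}+x} ≤ … ≤ {v_{τ(L)}+x}`. -/
def InterlaceFract (L : ℕ) (u v : Fin L → ℝ) : Prop :=
  ∃ σ τ : Equiv.Perm (Fin L), ∃ x : ℝ,
    (∀ i : Fin L, Int.fract (u (σ i) + x) ≤ Int.fract (v (τ i) + x)) ∧
    (∀ i : Fin L, ∀ h : i.val + 1 < L,
      Int.fract (v (τ i) + x) ≤ Int.fract (u (σ ⟨i.val + 1, h⟩) + x))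

open scoped Real

/-!
Rotate the difference `A - B` of the two exponential sums onto the positive real axis by a
factor `e^{iφ}`. Its norm is then `Σ_j (cos θ_j - cos θ'_j)`, where the angles
`θ_1 ≤ θ'_1 ≤ θ_2 ≤ … ≤ θ'_L` of the interlaced points lie in one period `[ψ, ψ + 2π]`.
Each `cos θ - cos θ'` is at most `∫_θ^θ' max(sin, 0)`, the total decrease of `cos` on
`[θ, θ']`; since these intervals do not overlap, the sum is at most the total decrease of
`cos` over a full period, which is `2`.
-/

open Real intervalIntegral

lemma Monotone.sum_sub_le_of_interlace {V : ℝ → ℝ} (hV : Monotone V) {L : ℕ} {lo hi : ℝ}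
    (hle : lo ≤ hi) (t s : Fin L → ℝ) (hlo : ∀ j, lo ≤ t j) (hhi : ∀ j, s j ≤ hi)
    (hchain : ∀ j : Fin L, ∀ h : j.val + 1 < L, s j ≤ t ⟨j.val + 1, h⟩) :
    ∑ j, (V (s j) - V (t j)) ≤ V hi - V lo := by
  set t' : ℕ → ℝ := fun n => if h : n < L then t ⟨n, h⟩ else hi
  have ht' (j : Fin L) : t' j = t j := dif_pos j.isLt
  calc ∑ j, (V (s j) - V (t j))
      ≤ ∑ j : Fin L, (V (t' (j + 1)) - V (t' j)) := by
        refine Finset.sum_le_sum fun j _ => ?_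
        rw [ht']
        refine sub_le_sub_right (hV ?_) _
        by_cases h : j.val + 1 < L
        · simpa [t', h] using hchain j h
        · simpa [t', h] using hhi j
    _ = V (t' L) - V (t' 0) := by
        rw [Fin.sum_univ_eq_sum_range (fun n => V (t' (n + 1)) - V (t' n)),
          Finset.sum_range_sub (fun n => V (t' n))]
    _ ≤ V hi - V lo := by
        have hL : t' L = hi := dif_neg (lt_irrefl L)
        have h0 : lo ≤ t' 0 := by
          by_cases h : 0 < L
          · simpa [t', h] using hlo ⟨0, h⟩
          · simpa [t', h] using hle
        rw [hL]
        linarith [hV h0]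

noncomputable def cosDescent (θ : ℝ) : ℝ := ∫ u in (0 : ℝ)..θ, max (sin u) 0

lemma continuous_max_sin_zero : Continuous fun u => max (sin u) 0 :=
  continuous_sin.max continuous_const

lemma cosDescent_sub (x y : ℝ) :
    cosDescent y - cosDescent x = ∫ u in x..y, max (sin u) 0 :=
  integral_interval_sub_left (continuous_max_sin_zero.intervalIntegrable _ _)
    (continuous_max_sin_zero.intervalIntegrable _ _)

lemma cosDescent_monotone : Monotone cosDescent := fun x y hxy => by
  have := integral_nonneg (μ := MeasureTheory.volume) hxy fun u _ => le_max_right (sin u) 0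
  linarith [cosDescent_sub x y]

lemma cos_sub_cos_le_cosDescent_sub {x y : ℝ} (hxy : x ≤ y) :
    cos x - cos y ≤ cosDescent y - cosDescent x := by
  rw [cosDescent_sub, ← integral_sin]
  exact integral_mono_on hxy (continuous_sin.intervalIntegrable _ _)
    (continuous_max_sin_zero.intervalIntegrable _ _) fun u _ => le_max_left _ _

lemma cosDescent_add_two_pi_sub (x : ℝ) : cosDescent (x + 2 * π) - cosDescent x = 2 := by
  have hperiodic : Function.Periodic (fun u => max (sin u) 0) (2 * π) := fun u => by
    simp only [sin_add_two_pi]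
  have hfirst : ∫ u in (0 : ℝ)..π, max (sin u) 0 = 2 := by
    rw [integral_congr (g := sin), integral_sin]
    · norm_num
    · intro u hu
      rw [Set.uIcc_of_le pi_nonneg] at hu
      exact max_eq_left (sin_nonneg_of_nonneg_of_le_pi hu.1 hu.2)
  have hsecond : ∫ u in π..(2 * π), max (sin u) 0 = 0 := by
    rw [integral_congr (g := fun _ => 0), integral_zero]
    intro u hu
    rw [Set.uIcc_of_le (by linarith [pi_nonneg])] at hu
    refine max_eq_right ?_
    simpa using sin_nonpos_of_nonpos_of_neg_pi_le (x := u - 2 * π) (by linarith [hu.2])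
      (by linarith [hu.1])
  rw [cosDescent_sub, hperiodic.intervalIntegral_add_eq x 0, zero_add,
    ← integral_add_adjacent_intervals (b := π) (continuous_max_sin_zero.intervalIntegrable _ _)
      (continuous_max_sin_zero.intervalIntegrable _ _), hfirst, hsecond, add_zero]

lemma sum_cos_sub_cos_le_two {L : ℕ} (φ : ℝ) (t s : Fin L → ℝ)
    (ht : ∀ j, 0 ≤ t j) (hs : ∀ j, s j ≤ 1) (hts : ∀ j, t j ≤ s j)
    (hst : ∀ j : Fin L, ∀ h : j.val + 1 < L, s j ≤ t ⟨j.val + 1, h⟩) :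
    ∑ j, (cos (2 * π * t j + φ) - cos (2 * π * s j + φ)) ≤ 2 := by
  have angle_mono {u v : ℝ} (h : u ≤ v) : 2 * π * u + φ ≤ 2 * π * v + φ := by
    have := pi_pos; gcongr
  calc ∑ j, (cos (2 * π * t j + φ) - cos (2 * π * s j + φ))
      ≤ ∑ j, (cosDescent (2 * π * s j + φ) - cosDescent (2 * π * t j + φ)) :=
        Finset.sum_le_sum fun j _ => cos_sub_cos_le_cosDescent_sub (angle_mono (hts j))
    _ ≤ cosDescent (φ + 2 * π) - cosDescent φ := by
        refine cosDescent_monotone.sum_sub_le_of_interlace (by linarith [pi_pos]) _ _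
          (fun j => ?_) (fun j => ?_) (fun j h => angle_mono (hst j h))
        · simpa using angle_mono (ht j)
        · simpa [add_comm] using angle_mono (hs j)
    _ = 2 := cosDescent_add_two_pi_sub φ

open Complex in
lemma Complex.norm_le_of_forall_re_exp_mul_le {z : ℂ} {c : ℝ}
    (h : ∀ φ : ℝ, (exp (φ * I) * z).re ≤ c) : ‖z‖ ≤ c := by
  convert h (-arg z)
  conv_rhs => rw [← norm_mul_exp_arg_mul_I z]
  rw [mul_left_comm, ← Complex.exp_add]
  push_cast
  simp

open Complex in
lemma re_exp_mul_exp_eq_cos_fract (φ x c y : ℝ) :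
    (exp (φ * I) * exp (2 * π * I * c * y)).re
      = Real.cos (2 * π * Int.fract (c * y + x) + (φ - 2 * π * x)) := by
  have hangle : (φ : ℂ) * I + 2 * π * I * c * y = ((2 * π * (c * y) + φ : ℝ) : ℂ) * I := by
    push_cast; ring
  rw [← Complex.exp_add, hangle, exp_ofReal_mul_I_re, Int.fract,
    ← Real.cos_sub_int_mul_two_pi _ ⌊c * y + x⌋]
  ring_nf

/-- If the fractional parts `{Na_j}` and `{Nb_j}` interlace cyclically, then
`|Σ_j e^{2πiNa_j} − Σ_j e^{2πiNb_j}|² ≤ 4`. -/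
theorem interlace_implies_sN_le_four (L : ℕ) (a b : Fin L → ℝ) (N : ℕ)
    (hinter : InterlaceFract L (fun i => (N : ℝ) * a i) (fun i => (N : ℝ) * b i)) :
    ‖(∑ j, Complex.exp (2 * π * Complex.I * (N : ℝ) * a j)) -
        ∑ j, Complex.exp (2 * π * Complex.I * (N : ℝ) * b j)‖ ^ 2 ≤ 4 := by
  obtain ⟨σ, τ, x, hts, hst⟩ := hinter
  refine (pow_le_pow_left₀ (norm_nonneg _) ?_ 2).trans_eq (by norm_num : (2 : ℝ) ^ 2 = 4)
  refine Complex.norm_le_of_forall_re_exp_mul_le fun φ => ?_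
  rw [mul_sub, Complex.sub_re, Finset.mul_sum, Finset.mul_sum, Complex.re_sum, Complex.re_sum]
  simp only [re_exp_mul_exp_eq_cos_fract φ x]
  rw [← Equiv.sum_comp σ, ← Equiv.sum_comp τ
    (fun j => Real.cos (2 * π * Int.fract (N * b j + x) + (φ - 2 * π * x))),
    ← Finset.sum_sub_distrib]
  exact sum_cos_sub_cos_le_two _ _ _ (fun _ => Int.fract_nonneg _)
    (fun _ => (Int.fract_lt_one _).le) hts hst
end
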